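/- Let λ₀ > 1 and set C := 1 + 2(λ₀² − 1)^{−1}. Then for every λ ≥ λ₀, every k > 0, and every Schwartz function w on ℝ^d, the high-frequency part Π_H w := 𝓕_k^{−1}( (1 − χ_λ) · 𝓕_k w ), where χ_λ is the indicator function of {ξ : |ξ| ≤ λ}, satisfies ⫼Π_H w⫼_{H²_k(ℝ^d)} ≤ C ‖(−k^{−2}Δ − 1)w‖_{L²(ℝ^d)}, where Δ is the Laplacian on ℝ^d. -/

import Mathlib

open MeasureTheory Complex

noncomputable section

/-- The scaled Fourier transform `𝓕ₖφ(ξ) = ∫ e^{-ik x·ξ} φ(x) dx`. -/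
def Fk (d : ℕ) (k : ℝ) (φ : EuclideanSpace ℝ (Fin d) → ℂ) (ξ : EuclideanSpace ℝ (Fin d)) : ℂ :=
  ∫ x : EuclideanSpace ℝ (Fin d), Complex.exp (-(Complex.I * k * (∑ i, x i * ξ i : ℝ))) * φ x

/-- Partial derivative in the `i`-th coordinate direction. -/
def pd (d : ℕ) (i : Fin d) (f : EuclideanSpace ℝ (Fin d) → ℂ) :
    EuclideanSpace ℝ (Fin d) → ℂ :=
  fun x => fderiv ℝ f x (EuclideanSpace.single i 1)

/-- The Laplacian `Δf = Σᵢ ∂ᵢ²f`. -/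
def lap (d : ℕ) (f : EuclideanSpace ℝ (Fin d) → ℂ) : EuclideanSpace ℝ (Fin d) → ℂ :=
  fun x => ∑ i, pd d i (pd d i f) x

/-- The weighted Fourier-side Sobolev norm `⫼·⫼_{H^s_k}` applied to the frequency-side
function `g = 𝓕ₖ u`: `⫼u⫼²_{H^s_k} = (k/(2π))^d ∫ (1+|ξ|²)^s |𝓕ₖu(ξ)|² dξ`. -/
def wNormF (d : ℕ) (k s : ℝ) (g : EuclideanSpace ℝ (Fin d) → ℂ) : ℝ :=
  Real.sqrt ((k / (2 * Real.pi)) ^ d *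
    ∫ ξ : EuclideanSpace ℝ (Fin d), (1 + ‖ξ‖ ^ 2) ^ s * ‖g ξ‖ ^ 2)

/-- The `L²(ℝ^d)` norm. -/
def l2Norm (d : ℕ) (f : EuclideanSpace ℝ (Fin d) → ℂ) : ℝ :=
  Real.sqrt (∫ x : EuclideanSpace ℝ (Fin d), ‖f x‖ ^ 2)

open FourierTransform Real SchwartzMap RealInnerProductSpace

abbrev V (d : ℕ) := EuclideanSpace ℝ (Fin d)

lemma Fk_eq (k : ℝ) (φ : V d → ℂ) (ξ : V d) :
    Fk d k φ ξ = 𝓕 φ ((k / (2 * π)) • ξ) := by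
  rw [Real.fourier_eq', Fk]
  congr 1 with x
  rw [smul_eq_mul]
  congr 2
  have : (inner ℝ x ((k / (2 * π)) • ξ) : ℝ) = (k / (2 * π)) * ∑ i, x i * ξ i := by
    rw [real_inner_smul_right]
    simp [PiLp.inner_apply, RCLike.inner_apply]
    left; exact Finset.sum_congr rfl fun i _ => mul_comm _ _
  rw [this]
  push_cast
  have hπ : (π : ℂ) ≠ 0 := by exact_mod_cast Real.pi_ne_zero
  field_simp

-- Plancherel for Schwartz functions
lemma plancherel_schwartz (f : SchwartzMap (V d) ℂ) :
    ∫ ξ : V d, ‖𝓕 (⇑f) ξ‖ ^ 2 = ∫ x : V d, ‖f x‖ ^ 2 := by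
  have hFis : (⇑(fourierTransformCLM ℂ f) : V d → ℂ) = 𝓕 ⇑f := rfl
  set F : SchwartzMap (V d) ℂ := fourierTransformCLM ℂ f with hF
  have hg_int : Integrable (fun ξ : V d => (starRingEnd ℂ) (F ξ)) := by
    refine F.integrable.mono ?_ ?_
    · exact (Complex.continuous_conj.comp F.continuous).aestronglyMeasurable
    · filter_upwards with ξ; simp
  -- 𝓕 (conj ∘ F) = conj ∘ f
  have hFg : ∀ x, 𝓕 (fun ξ : V d => (starRingEnd ℂ) (F ξ)) x = (starRingEnd ℂ) (f x) := by
    intro x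
    have hinv : 𝓕⁻ (𝓕 ⇑f) x = f x :=
      f.integrable.fourierInv_fourier_eq F.integrable f.continuous.continuousAt
    rw [Real.fourier_eq']
    have : ∀ v : V d, Complex.exp (↑(-2 * π * (inner ℝ v x : ℝ)) * Complex.I) • (starRingEnd ℂ) (F v)
        = (starRingEnd ℂ) (Complex.exp (↑(2 * π * (inner ℝ v x : ℝ)) * Complex.I) • F v) := by
      intro v
      simp only [smul_eq_mul, map_mul, ← Complex.exp_conj, map_mul, Complex.conj_I,
        Complex.conj_ofReal]
      push_cast
      ring_nf
    rw [integral_congr_ae (Filter.Eventually.of_forall this), integral_conj]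
    rw [← Real.fourierInv_eq' (⇑F) x]
    rw [hFis] at *
    rw [hinv]
  have flipEq : (innerₗ (V d)).flip = innerₗ (V d) := by
    ext x y; exact real_inner_comm x y
  have key := VectorFourier.integral_fourierIntegral_smul_eq_flip (L := innerₗ (V d)) (μ := (volume : Measure (V d))) (ν := (volume : Measure (V d)))
    Real.continuous_fourierChar continuous_inner f.integrable hg_int
  rw [flipEq] at key
  have L1 : ∫ ξ : V d, (VectorFourier.fourierIntegral 𝐞 volume (innerₗ (V d)) (⇑f) ξ) •
      ((starRingEnd ℂ) (F ξ)) = ∫ ξ : V d, ((‖𝓕 (⇑f) ξ‖ ^ 2 : ℝ) : ℂ) := by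
    congr 1 with ξ
    rw [show VectorFourier.fourierIntegral 𝐞 volume (innerₗ (V d)) (⇑f) ξ = 𝓕 (⇑f) ξ from rfl,
      ← hFis, smul_eq_mul, Complex.mul_conj]
    simp [Complex.normSq_eq_norm_sq, hFis]
  have L2 : ∫ x : V d, f x • (VectorFourier.fourierIntegral 𝐞 volume (innerₗ (V d))
      (fun ξ : V d => (starRingEnd ℂ) (F ξ)) x) = ∫ x : V d, ((‖f x‖ ^ 2 : ℝ) : ℂ) := by
    congr 1 with x
    rw [show VectorFourier.fourierIntegral 𝐞 volume (innerₗ (V d))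
        (fun ξ : V d => (starRingEnd ℂ) (F ξ)) x
        = 𝓕 (fun ξ : V d => (starRingEnd ℂ) (F ξ)) x from rfl,
      hFg x, smul_eq_mul, Complex.mul_conj]
    simp [Complex.normSq_eq_norm_sq]
  rw [L1, L2] at key
  have h1 : ((∫ ξ : V d, ‖𝓕 (⇑f) ξ‖ ^ 2 : ℝ) : ℂ) = ((∫ x : V d, ‖f x‖ ^ 2 : ℝ) : ℂ) := by
    have e1 : ∀ g : V d → ℝ, ((∫ x : V d, g x : ℝ) : ℂ) = ∫ x : V d, ((g x : ℝ) : ℂ) := by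
      intro g
      exact (integral_ofReal (𝕜 := ℂ)).symm
    rw [e1, e1]; exact key
  exact_mod_cast h1

lemma fourier_pderiv (f : SchwartzMap (V d) ℂ) (v : V d) (ξ : V d) :
    𝓕 (fun x => fderiv ℝ (⇑f) x v) ξ
      = (2 * π * Complex.I * ((inner ℝ v ξ : ℝ) : ℂ)) * 𝓕 (⇑f) ξ := by
  have hder : (⇑(fderivCLM ℝ (V d) ℂ f) : V d → (V d →L[ℝ] ℂ)) = fderiv ℝ (⇑f) := by
    funext x; exact fderivCLM_apply ℝ f x
  have hint : Integrable (fderiv ℝ (⇑f)) := hder ▸ (fderivCLM ℝ (V d) ℂ f).integrable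
  calc 𝓕 (fun x => fderiv ℝ (⇑f) x v) ξ
      = 𝓕 (fderiv ℝ (⇑f)) ξ v := (Real.fourier_continuousLinearMap_apply hint).symm
    _ = VectorFourier.fourierSMulRight (-innerSL ℝ) (𝓕 (⇑f)) ξ v := by
        rw [Real.fourier_fderiv f.integrable f.differentiable hint]
    _ = (2 * π * Complex.I * ((inner ℝ v ξ : ℝ) : ℂ)) * 𝓕 (⇑f) ξ := by
        simp only [VectorFourier.fourierSMulRight_apply, ContinuousLinearMap.neg_apply,
          innerSL_apply_apply]
        rw [real_inner_comm]
        simp only [neg_smul, smul_smul, real_smul]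
        push_cast
        ring_nf
        simp [mul_comm, mul_assoc, mul_left_comm, innerSL_apply_apply]
        exact Or.inl rfl

def pderivCLM (𝕜 : Type) [RCLike 𝕜] [NormedSpace 𝕜 ℂ] [SMulCommClass ℝ 𝕜 ℂ] (m : V d) :
    SchwartzMap (V d) ℂ →L[𝕜] SchwartzMap (V d) ℂ :=
  SchwartzMap.evalCLM 𝕜 (V d) ℂ m ∘L fderivCLM 𝕜 (V d) ℂ

lemma pderivCLM_apply (𝕜 : Type) [RCLike 𝕜] [NormedSpace 𝕜 ℂ] [SMulCommClass ℝ 𝕜 ℂ] (m : V d)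
    (f : SchwartzMap (V d) ℂ) (x : V d) : pderivCLM 𝕜 m f x = fderiv ℝ f x m := rfl

lemma fourier_pderiv2 (f : SchwartzMap (V d) ℂ) (v : V d) (ξ : V d) :
    𝓕 (⇑(pderivCLM ℝ v (pderivCLM ℝ v f))) ξ
      = (2 * π * Complex.I * ((inner ℝ v ξ : ℝ) : ℂ)) ^ 2 * 𝓕 (⇑f) ξ := by
  have h1 : ⇑(pderivCLM ℝ v (pderivCLM ℝ v f))
      = fun x => fderiv ℝ (⇑(pderivCLM ℝ v f)) x v := by
    funext x; exact pderivCLM_apply ℝ v _ x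
  rw [h1, fourier_pderiv (pderivCLM ℝ v f) v ξ]
  have h2 : ⇑(pderivCLM ℝ v f) = fun x => fderiv ℝ (⇑f) x v := by
    funext x; exact pderivCLM_apply ℝ v f x
  rw [h2, fourier_pderiv f v ξ]; ring

lemma plancherel_k (k : ℝ) (hk : 0 < k) (f : SchwartzMap (V d) ℂ) :
    (k / (2 * π)) ^ d * ∫ ξ : V d, ‖Fk d k (⇑f) ξ‖ ^ 2 = ∫ x : V d, ‖f x‖ ^ 2 := by
  have hc : 0 < k / (2 * π) := div_pos hk (by positivity)
  have h1 : (fun ξ : V d => ‖Fk d k (⇑f) ξ‖ ^ 2)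
      = fun ξ : V d => (fun η : V d => ‖𝓕 (⇑f) η‖ ^ 2) ((k / (2 * π)) • ξ) := by
    funext ξ; rw [Fk_eq]
  rw [h1, MeasureTheory.Measure.integral_comp_smul volume
    (fun η : V d => ‖𝓕 (⇑f) η‖ ^ 2) (k / (2 * π))]
  rw [finrank_euclideanSpace_fin, smul_eq_mul, abs_of_pos (by positivity), ← mul_assoc,
    mul_inv_cancel₀ (by positivity), one_mul]
  exact plancherel_schwartz f

lemma sq_norm_integrable (f : SchwartzMap (V d) ℂ) :
    Integrable (fun x : V d => ‖f x‖ ^ 2) := by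
  refine Integrable.mono'
    (g := fun x : V d => (SchwartzMap.seminorm ℝ 0 0 f) * ‖f x‖)
    (f.integrable.norm.const_mul _) ((f.continuous.norm.pow 2).aestronglyMeasurable) ?_
  filter_upwards with x
  rw [Real.norm_of_nonneg (by positivity), pow_two]
  exact mul_le_mul_of_nonneg_right (norm_le_seminorm ℝ f x) (norm_nonneg _)

def opS (d : ℕ) (k : ℝ) (w : SchwartzMap (V d) ℂ) : SchwartzMap (V d) ℂ :=
  (-(((k : ℂ) ^ 2)⁻¹)) • (∑ i : Fin d, pderivCLM ℝ (EuclideanSpace.single i (1:ℝ))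
    (pderivCLM ℝ (EuclideanSpace.single i (1:ℝ)) w)) - w

lemma opS_apply (k : ℝ) (w : SchwartzMap (V d) ℂ) (x : V d) :
    opS d k w x = -(((k ^ 2 : ℝ) : ℂ))⁻¹ * (∑ i : Fin d, pd d i (pd d i (⇑w)) x) - w x := by
  have hcoe : ⇑(∑ i : Fin d, pderivCLM ℝ (EuclideanSpace.single i (1:ℝ))
      (pderivCLM ℝ (EuclideanSpace.single i (1:ℝ)) w))
      = ∑ i : Fin d, ⇑(pderivCLM ℝ (EuclideanSpace.single i (1:ℝ))
      (pderivCLM ℝ (EuclideanSpace.single i (1:ℝ)) w)) := by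
    rw [← coe_coeHom, map_sum]
  have hS : (∑ i : Fin d, pderivCLM ℝ (EuclideanSpace.single i (1:ℝ))
      (pderivCLM ℝ (EuclideanSpace.single i (1:ℝ)) w)) x
      = ∑ i : Fin d, pd d i (pd d i (⇑w)) x := by
    rw [show ((∑ i : Fin d, pderivCLM ℝ (EuclideanSpace.single i (1:ℝ))
      (pderivCLM ℝ (EuclideanSpace.single i (1:ℝ)) w)) x)
      = (⇑(∑ i : Fin d, pderivCLM ℝ (EuclideanSpace.single i (1:ℝ))
      (pderivCLM ℝ (EuclideanSpace.single i (1:ℝ)) w))) x from rfl, hcoe, Finset.sum_apply]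
    refine Finset.sum_congr rfl fun i _ => ?_
    rw [pderivCLM_apply]
    have : ⇑(pderivCLM ℝ (EuclideanSpace.single i (1:ℝ)) w) = pd d i (⇑w) := by
      funext y; exact pderivCLM_apply ℝ _ w y
    rw [this]
    rfl
  rw [opS, sub_apply, smul_apply, smul_eq_mul, hS]
  norm_cast

lemma Fk_opS (k : ℝ) (hk : 0 < k) (w : SchwartzMap (V d) ℂ) (ξ : V d) :
    Fk d k (⇑(opS d k w)) ξ = (((‖ξ‖ ^ 2 - 1 : ℝ)) : ℂ) * Fk d k (⇑w) ξ := by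
  have h2π : (2 * π : ℝ) ≠ 0 := by positivity
  set c : ℝ := k / (2 * π) with hc
  rw [Fk_eq, Fk_eq]
  set η : V d := c • ξ with hη
  have hFT : (fourierTransformCLM ℂ (opS d k w)) =
      (-(((k : ℂ) ^ 2)⁻¹)) • (∑ i : Fin d, fourierTransformCLM ℂ
        (pderivCLM ℝ (EuclideanSpace.single i (1:ℝ))
          (pderivCLM ℝ (EuclideanSpace.single i (1:ℝ)) w))) - fourierTransformCLM ℂ w := by
    rw [opS, map_sub, _root_.map_smul, map_sum]
  have hev : 𝓕 (⇑(opS d k w)) η = (-(((k : ℂ) ^ 2)⁻¹)) *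
      (∑ i : Fin d, 𝓕 (⇑(pderivCLM ℝ (EuclideanSpace.single i (1:ℝ))
        (pderivCLM ℝ (EuclideanSpace.single i (1:ℝ)) w))) η) - 𝓕 (⇑w) η := by
    have := congrArg (fun (g : SchwartzMap (V d) ℂ) => g η) hFT
    simp only [fourierTransformCLM_apply] at this ⊢
    rw [show (𝓕 (⇑(opS d k w)) η : ℂ) = (fourierTransformCLM ℂ (opS d k w)) η from rfl, hFT]
    rw [sub_apply, smul_apply, smul_eq_mul]
    have hcoe : ⇑(∑ i : Fin d, fourierTransformCLM ℂ
        (pderivCLM ℝ (EuclideanSpace.single i (1:ℝ))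
          (pderivCLM ℝ (EuclideanSpace.single i (1:ℝ)) w)))
        = ∑ i : Fin d, ⇑(fourierTransformCLM ℂ
        (pderivCLM ℝ (EuclideanSpace.single i (1:ℝ))
          (pderivCLM ℝ (EuclideanSpace.single i (1:ℝ)) w))) := by
      rw [← coe_coeHom, map_sum]
    congr 2
    rw [show ((∑ i : Fin d, fourierTransformCLM ℂ
        (pderivCLM ℝ (EuclideanSpace.single i (1:ℝ))
          (pderivCLM ℝ (EuclideanSpace.single i (1:ℝ)) w))) η)
      = (⇑(∑ i : Fin d, fourierTransformCLM ℂ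
        (pderivCLM ℝ (EuclideanSpace.single i (1:ℝ))
          (pderivCLM ℝ (EuclideanSpace.single i (1:ℝ)) w)))) η from rfl, hcoe,
      Finset.sum_apply]
    exact Finset.sum_congr rfl fun i _ => rfl
  rw [hev]
  have hterm : ∀ i : Fin d, 𝓕 (⇑(pderivCLM ℝ (EuclideanSpace.single i (1:ℝ))
      (pderivCLM ℝ (EuclideanSpace.single i (1:ℝ)) w))) η
      = (2 * π * Complex.I * ((c * ξ i : ℝ) : ℂ)) ^ 2 * 𝓕 (⇑w) η := by
    intro i
    rw [fourier_pderiv2]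
    congr 3
    have : (inner ℝ (EuclideanSpace.single i (1:ℝ)) η : ℝ) = η i := by
      rw [EuclideanSpace.inner_single_left]; simp
    rw [this, hη]
    simp [smul_eq_mul]
  have hck : 2 * π * c = k := by rw [hc]; field_simp
  have hnorm : ∑ i : Fin d, (ξ i) ^ 2 = ‖ξ‖ ^ 2 := by
    rw [← real_inner_self_eq_norm_sq]
    simp [PiLp.inner_apply, RCLike.inner_apply, pow_two]
    rw [← pow_two, EuclideanSpace.norm_sq_eq]; simp [pow_two, Real.norm_eq_abs, abs_mul_abs_self]
  have hsum : ∑ i : Fin d, (2 * π * Complex.I * ((c * ξ i : ℝ) : ℂ)) ^ 2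
      = -(((k ^ 2 * ‖ξ‖ ^ 2 : ℝ)) : ℂ) := by
    have h1 : ∀ i : Fin d, (2 * π * Complex.I * ((c * ξ i : ℝ) : ℂ)) ^ 2
        = -(((k ^ 2 * (ξ i) ^ 2 : ℝ)) : ℂ) := by
      intro i
      have h2 : ((2 * π * c : ℝ) : ℂ) = (k : ℂ) := by exact_mod_cast congrArg Complex.ofReal hck
      push_cast at h2 ⊢
      rw [show (2 * ↑π * Complex.I * (↑c * ↑(ξ i))) ^ 2
        = (2 * ↑π * ↑c) ^ 2 * (↑(ξ i) : ℂ) ^ 2 * Complex.I ^ 2 by ring, h2, Complex.I_sq]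
      ring
    rw [Finset.sum_congr rfl fun i _ => h1 i, ← hnorm, Finset.mul_sum]
    push_cast
    rw [Finset.sum_neg_distrib]
  calc (-(((k : ℂ) ^ 2)⁻¹)) * (∑ i : Fin d, 𝓕 (⇑(pderivCLM ℝ (EuclideanSpace.single i (1:ℝ))
        (pderivCLM ℝ (EuclideanSpace.single i (1:ℝ)) w))) η) - 𝓕 (⇑w) η
      = (-(((k : ℂ) ^ 2)⁻¹)) * ((∑ i : Fin d,
          (2 * π * Complex.I * ((c * ξ i : ℝ) : ℂ)) ^ 2) * 𝓕 (⇑w) η) - 𝓕 (⇑w) η := by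
        rw [Finset.sum_congr rfl fun i _ => hterm i, ← Finset.sum_mul]
    _ = (((‖ξ‖ ^ 2 - 1 : ℝ)) : ℂ) * 𝓕 (⇑w) η := by
        rw [hsum]
        have hk' : ((k : ℂ) ^ 2) ≠ 0 :=
          pow_ne_zero _ (Complex.ofReal_ne_zero.2 hk.ne')
        push_cast
        field_simp
        rw [mul_div_cancel_left₀ _ (Complex.ofReal_ne_zero.2 hk.ne')]


/-- **H²-bound on the high-frequency part.**
Let `λ₀ > 1`, `C := 1 + 2(λ₀²−1)⁻¹`.  For every `λ ≥ λ₀`, `k > 0`, and Schwartz `w`, the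
high-frequency part `Π_H w := 𝓕ₖ⁻¹((1−χ_λ) ⬝ 𝓕ₖw)` (whose scaled Fourier transform is
`(1−χ_λ) ⬝ 𝓕ₖw`, through which its weighted norm is expressed) satisfies
`⫼Π_H w⫼_{H²_k(ℝ^d)} ≤ C ‖(−k⁻²Δ − 1)w‖_{L²(ℝ^d)}`. -/
theorem high_frequency_H2_bound
    {d : ℕ} (lam₀ : ℝ) (hlam₀ : 1 < lam₀) (lam : ℝ) (hlam : lam₀ ≤ lam)
    (k : ℝ) (hk : 0 < k) (w : SchwartzMap (EuclideanSpace ℝ (Fin d)) ℂ) :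
    wNormF d k 2
        (fun ξ => (1 - (if ‖ξ‖ ≤ lam then (1 : ℂ) else 0)) * Fk d k (fun x => w x) ξ)
      ≤ (1 + 2 * (lam₀ ^ 2 - 1)⁻¹) *
        l2Norm d (fun x => -((k ^ 2 : ℝ) : ℂ)⁻¹ * lap d (fun y => w y) x - w x) := by
  set C : ℝ := 1 + 2 * (lam₀ ^ 2 - 1)⁻¹ with hCdef
  have hl2 : (1 : ℝ) < lam₀ ^ 2 := by nlinarith
  have hpos : (0 : ℝ) < lam₀ ^ 2 - 1 := by linarith
  have hC0 : (0 : ℝ) < C := by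
    have : (0:ℝ) < (lam₀ ^ 2 - 1)⁻¹ := by positivity
    rw [hCdef]; linarith
  set u : SchwartzMap (V d) ℂ := opS d k w with hu
  have huval : ∀ x : V d, (-((k ^ 2 : ℝ) : ℂ)⁻¹ * lap d (fun y => w y) x - w x) = u x := by
    intro x
    rw [hu, opS_apply]
    rfl
  set G : V d → ℂ := Fk d k (fun x => w x) with hG
  have hFkw : ∀ ξ : V d, Fk d k (⇑u) ξ = (((‖ξ‖ ^ 2 - 1 : ℝ)) : ℂ) * G ξ := by
    intro ξ
    rw [hu]
    exact Fk_opS k hk w ξ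
  -- pointwise bound
  have hpw : ∀ ξ : V d, (1 + ‖ξ‖ ^ 2) ^ (2:ℝ) *
      ‖(1 - (if ‖ξ‖ ≤ lam then (1 : ℂ) else 0)) * G ξ‖ ^ 2
      ≤ C ^ 2 * ‖Fk d k (⇑u) ξ‖ ^ 2 := by
    intro ξ
    by_cases hξ : ‖ξ‖ ≤ lam
    · have hz : ((1:ℂ) - (if ‖ξ‖ ≤ lam then (1 : ℂ) else 0)) * G ξ = 0 := by
        simp [hξ]
      rw [hz, norm_zero]
      have : ((0:ℝ)) ^ 2 = 0 := by norm_num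
      rw [this, mul_zero]
      positivity
    · have ho : ((1:ℂ) - (if ‖ξ‖ ≤ lam then (1 : ℂ) else 0)) * G ξ = G ξ := by
        simp [hξ]
      rw [ho, hFkw ξ, norm_mul, mul_pow, Complex.norm_real, Real.norm_eq_abs, _root_.sq_abs]
      push_neg at hξ
      set t : ℝ := ‖ξ‖ ^ 2 with ht
      have htt : lam₀ ^ 2 ≤ t := by
        have h1 : lam₀ ≤ ‖ξ‖ := le_of_lt (lt_of_le_of_lt hlam hξ)
        have h0 : (0:ℝ) ≤ lam₀ := by linarith
        rw [ht]
        nlinarith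
      have h1t : 1 + t ≤ C * (t - 1) := by
        have h2 : 2 ≤ 2 * (lam₀ ^ 2 - 1)⁻¹ * (t - 1) := by
          have hle : lam₀ ^ 2 - 1 ≤ t - 1 := by linarith
          have h3 : 2 * (lam₀ ^ 2 - 1)⁻¹ * (lam₀ ^ 2 - 1)
              ≤ 2 * (lam₀ ^ 2 - 1)⁻¹ * (t - 1) :=
            mul_le_mul_of_nonneg_left hle (by positivity)
          rwa [mul_assoc, inv_mul_cancel₀ hpos.ne', mul_one] at h3
        rw [hCdef]
        nlinarith
      have hsq : (1 + t) ^ 2 ≤ C ^ 2 * (t - 1) ^ 2 := by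
        rw [← mul_pow]
        have h0 : (0:ℝ) ≤ 1 + t := by positivity
        exact pow_le_pow_left₀ h0 h1t 2
      have hrpow : ((1 + t) ^ (2:ℝ) : ℝ) = (1 + t) ^ (2:ℕ) := by
        rw [show ((2:ℝ)) = ((2:ℕ) : ℝ) by norm_num, Real.rpow_natCast]
      rw [hrpow]
      calc (1 + t) ^ (2:ℕ) * ‖G ξ‖ ^ 2 ≤ (C ^ 2 * (t - 1) ^ 2) * ‖G ξ‖ ^ 2 :=
            mul_le_mul_of_nonneg_right hsq (by positivity)
        _ = C ^ 2 * ((t - 1) ^ 2 * ‖G ξ‖ ^ 2) := by ring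
  -- integrability of the dominating function
  have hint : Integrable (fun ξ : V d => C ^ 2 * ‖Fk d k (⇑u) ξ‖ ^ 2) := by
    have hcomp : (fun ξ : V d => ‖Fk d k (⇑u) ξ‖ ^ 2)
        = fun ξ : V d => (fun η : V d => ‖(fourierTransformCLM ℂ u) η‖ ^ 2)
            ((k / (2 * π)) • ξ) := by
      funext ξ
      rw [Fk_eq]
      rfl
    have hR : (k / (2 * π)) ≠ 0 := by positivity
    have h1 : Integrable (fun η : V d => ‖(fourierTransformCLM ℂ u) η‖ ^ 2) :=
      sq_norm_integrable (fourierTransformCLM ℂ u)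
    have h2 : Integrable (fun ξ : V d => ‖Fk d k (⇑u) ξ‖ ^ 2) := by
      rw [hcomp]
      exact (integrable_comp_smul_iff volume _ hR).2 h1
    exact h2.const_mul _
  have hmono : ∫ ξ : V d, (1 + ‖ξ‖ ^ 2) ^ (2:ℝ) *
      ‖(1 - (if ‖ξ‖ ≤ lam then (1 : ℂ) else 0)) * G ξ‖ ^ 2
      ≤ ∫ ξ : V d, C ^ 2 * ‖Fk d k (⇑u) ξ‖ ^ 2 := by
    refine integral_mono_of_nonneg (Filter.Eventually.of_forall fun ξ => by positivity) hint
      (Filter.Eventually.of_forall hpw)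
  have hplan : (k / (2 * π)) ^ d * ∫ ξ : V d, ‖Fk d k (⇑u) ξ‖ ^ 2
      = ∫ x : V d, ‖u x‖ ^ 2 := plancherel_k k hk u
  have hfinal : (k / (2 * π)) ^ d * (∫ ξ : V d, (1 + ‖ξ‖ ^ 2) ^ (2:ℝ) *
      ‖(1 - (if ‖ξ‖ ≤ lam then (1 : ℂ) else 0)) * G ξ‖ ^ 2)
      ≤ C ^ 2 * ∫ x : V d, ‖u x‖ ^ 2 := by
    calc (k / (2 * π)) ^ d * (∫ ξ : V d, (1 + ‖ξ‖ ^ 2) ^ (2:ℝ) *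
        ‖(1 - (if ‖ξ‖ ≤ lam then (1 : ℂ) else 0)) * G ξ‖ ^ 2)
        ≤ (k / (2 * π)) ^ d * ∫ ξ : V d, C ^ 2 * ‖Fk d k (⇑u) ξ‖ ^ 2 :=
          mul_le_mul_of_nonneg_left hmono (by positivity)
      _ = C ^ 2 * ((k / (2 * π)) ^ d * ∫ ξ : V d, ‖Fk d k (⇑u) ξ‖ ^ 2) := by
          rw [integral_const_mul]; ring
      _ = C ^ 2 * ∫ x : V d, ‖u x‖ ^ 2 := by rw [hplan]
  have hgoal : wNormF d k 2
      (fun ξ => (1 - (if ‖ξ‖ ≤ lam then (1 : ℂ) else 0)) * G ξ)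
      ≤ C * l2Norm d (fun x : V d => u x) := by
    rw [wNormF, l2Norm]
    calc Real.sqrt ((k / (2 * Real.pi)) ^ d *
        ∫ ξ : V d, (1 + ‖ξ‖ ^ 2) ^ (2:ℝ) *
          ‖(1 - (if ‖ξ‖ ≤ lam then (1 : ℂ) else 0)) * G ξ‖ ^ 2)
        ≤ Real.sqrt (C ^ 2 * ∫ x : V d, ‖u x‖ ^ 2) := Real.sqrt_le_sqrt hfinal
      _ = C * Real.sqrt (∫ x : V d, ‖u x‖ ^ 2) := by
          rw [Real.sqrt_mul (sq_nonneg C), Real.sqrt_sq hC0.le]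
  have hfun : (fun x : V d => -((k ^ 2 : ℝ) : ℂ)⁻¹ * lap d (fun y => w y) x - w x)
      = fun x : V d => u x := funext huval
  rw [hfun]
  exact hgoal

end
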